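/- arXiv:1501.01030 — 3 statements merged into one kernel-verified Lean document; each statement's English description precedes it below -/
import Mathlib

section
/- Let F be a field and n ≥ 1, and assume that every irreducible polynomial in F[x] has degree strictly less than n. Then every matrix A ∈ M_n(F) commutes with some nonzero nilpotent matrix in M_n(F) or with some nontrivial idempotent matrix in M_n(F). -/
/-!
Split according to the minimal polynomial `μ` of `A`. If `μ` has a repeated factor, `μ = x²r`,
then `x(A) r(A)` is a nonzero nilpotent polynomial in `A`. If `μ = pq` with `p`, `q` coprime
nonunits, a Bézout relation `up + vq = 1` gives the idempotent `u(A) p(A)`. If `μ` is irreducible,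
`Fⁿ` is a vector space over the field `F[X]/(μ)`, of dimension `n / deg μ ≥ 2` by the hypothesis;
a projection onto a line over that field is an idempotent commuting with `A`.
-/

open Polynomial Module

section

variable {F R : Type*} [Field F] [Ring R] [Algebra F R] {a : R}

theorem Polynomial.commute_aeval_self (a : R) (p : F[X]) : Commute a (aeval a p) := by
  simpa using (commute_X p).map (aeval a)

theorem exists_isNilpotent_commute_of_not_squarefree_minpoly (ha : IsIntegral F a)
    (h : ¬Squarefree (minpoly F a)) : ∃ N : R, N ≠ 0 ∧ IsNilpotent N ∧ Commute a N := by
  obtain ⟨x, ⟨r, hr⟩, hx⟩ : ∃ x, x * x ∣ minpoly F a ∧ ¬IsUnit x := by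
    simpa [Squarefree] using h
  have hxr : x * r ≠ 0 := by
    intro h0
    exact minpoly.ne_zero ha (by rw [hr, mul_assoc, h0, mul_zero])
  refine ⟨aeval a (x * r), fun h0 => hx ?_, ⟨2, ?_⟩, commute_aeval_self a _⟩
  · have hdvd : x * (x * r) ∣ 1 * (x * r) := by
      rw [one_mul, ← mul_assoc, ← hr]
      exact minpoly.dvd F a h0
    exact isUnit_of_dvd_one ((mul_dvd_mul_iff_right hxr).mp hdvd)
  · rw [← map_pow, show (x * r) ^ 2 = minpoly F a * r by rw [hr]; ring, map_mul, minpoly.aeval,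
      zero_mul]

theorem aeval_mul_ne_zero_of_minpoly_eq_mul {p q u v : F[X]} (ha : IsIntegral F a)
    (hpq : minpoly F a = p * q) (huv : u * p + v * q = 1) (hq : ¬IsUnit q) :
    aeval a (u * p) ≠ 0 := by
  intro h0
  have hp : p ≠ 0 := left_ne_zero_of_mul (hpq ▸ minpoly.ne_zero ha)
  have hqu : q ∣ u := by
    rw [← mul_dvd_mul_iff_right hp, mul_comm q, ← hpq]
    exact minpoly.dvd F a h0
  exact hq (isUnit_of_dvd_one (huv ▸ dvd_add (dvd_mul_of_dvd_left hqu p) (dvd_mul_left q v)))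

theorem exists_isIdempotentElem_commute_of_minpoly_eq_mul {p q : F[X]} (ha : IsIntegral F a)
    (hpq : minpoly F a = p * q) (hcop : IsCoprime p q) (hp : ¬IsUnit p) (hq : ¬IsUnit q) :
    ∃ E : R, IsIdempotentElem E ∧ E ≠ 0 ∧ E ≠ 1 ∧ Commute a E := by
  obtain ⟨u, v, huv⟩ := hcop
  have hE : 1 - aeval a (u * p) = aeval a (v * q) := by
    rw [sub_eq_iff_eq_add', ← map_add, huv, map_one]
  refine ⟨aeval a (u * p), ?_, aeval_mul_ne_zero_of_minpoly_eq_mul ha hpq huv hq, fun h1 => ?_,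
    commute_aeval_self a _⟩
  · have h0 : aeval a (u * p) * (1 - aeval a (u * p)) = 0 := by
      rw [hE, ← map_mul, show u * p * (v * q) = u * v * (p * q) by ring, ← hpq, map_mul,
        minpoly.aeval, mul_zero]
    rwa [mul_one_sub, sub_eq_zero, eq_comm] at h0
  · refine aeval_mul_ne_zero_of_minpoly_eq_mul ha (hpq.trans (mul_comm p q))
      ((add_comm _ _).trans huv) hp ?_
    rw [← hE, h1, sub_self]

theorem Squarefree.exists_eq_mul_isCoprime {R : Type*} [CommRing R] [IsDomain R]
    [IsPrincipalIdealRing R] {m : R} (hm : Squarefree m) (hirr : ¬Irreducible m) (hu : ¬IsUnit m) :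
    ∃ p q : R, m = p * q ∧ IsCoprime p q ∧ ¬IsUnit p ∧ ¬IsUnit q := by
  obtain ⟨p, hp, q, rfl⟩ := WfDvdMonoid.exists_irreducible_factor hu hm.ne_zero
  have hpq : ¬p ∣ q := fun hdvd => hp.not_isUnit (hm p (mul_dvd_mul_left p hdvd))
  refine ⟨p, q, rfl, (hp.isCoprime_or_dvd q).resolve_right hpq, hp.not_isUnit, fun hq => ?_⟩
  exact hirr ((associated_mul_unit_right p q hq).irreducible hp)

theorem exists_isIdempotentElem_commute_of_squarefree_minpoly [Nontrivial R] (ha : IsIntegral F a)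
    (hsq : Squarefree (minpoly F a)) (hirr : ¬Irreducible (minpoly F a)) :
    ∃ E : R, IsIdempotentElem E ∧ E ≠ 0 ∧ E ≠ 1 ∧ Commute a E := by
  obtain ⟨p, q, hpq, hcop, hp, hq⟩ :=
    hsq.exists_eq_mul_isCoprime hirr (minpoly.not_isUnit F a)
  exact exists_isIdempotentElem_commute_of_minpoly_eq_mul ha hpq hcop hp hq

end

theorem Module.End.exists_isIdempotentElem_ne_zero_ne_one {K V : Type*} [DivisionRing K]
    [AddCommGroup V] [Module K V] (hV : 1 < finrank K V) :
    ∃ e : Module.End K V, IsIdempotentElem e ∧ e ≠ 0 ∧ e ≠ 1 := by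
  have : Module.Finite K V := Module.finite_of_finrank_pos (zero_lt_one.trans hV)
  obtain ⟨v, hv⟩ := finrank_pos_iff_exists_ne_zero.mp (zero_lt_one.trans hV)
  obtain ⟨W, hW⟩ := Submodule.exists_isCompl (K ∙ v)
  refine ⟨(K ∙ v).projection W hW, Submodule.isIdempotentElem_projection hW, fun h0 => hv ?_,
    fun h1 => ?_⟩
  · simpa [h0, eq_comm] using
      Submodule.projection_apply_of_mem_left hW (Submodule.mem_span_singleton_self v)
  · have hline : finrank K (K ∙ v) = finrank K V := by
      rw [← finrank_top K V, ← Submodule.range_projection hW, h1, Module.End.one_eq_id,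
        LinearMap.range_id]
    rw [finrank_span_singleton hv] at hline
    omega

theorem Module.End.exists_isIdempotentElem_commute_of_irreducible_minpoly {F V : Type*} [Field F]
    [AddCommGroup V] [Module F V] [FiniteDimensional F V] (f : Module.End F V)
    (hf : Irreducible (minpoly F f)) (hdeg : (minpoly F f).natDegree < finrank F V) :
    ∃ e : Module.End F V, IsIdempotentElem e ∧ e ≠ 0 ∧ e ≠ 1 ∧ Commute f e := by
  have := Fact.mk hf
  let K := AdjoinRoot (minpoly F f)
  let φ : K →ₐ[F] Module.End F V := Ideal.Quotient.liftₐ _ (aeval f) fun p hp => by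
    obtain ⟨q, rfl⟩ := Ideal.mem_span_singleton'.mp hp
    rw [map_mul, minpoly.aeval, mul_zero]
  let : Module K V := Module.compHom V φ.toRingHom
  have : IsScalarTower F K V := ⟨fun c k v => show φ (c • k) v = c • φ k v by rw [map_smul]; rfl⟩
  have hroot : ∀ v : V, f v = AdjoinRoot.root (minpoly F f) • v := fun v =>
    show f v = aeval f X v by rw [aeval_X]
  let pb := AdjoinRoot.powerBasis hf.ne_zero
  have : FiniteDimensional F K := pb.finite
  have : FiniteDimensional K V := .of_restrictScalars_finite F K V
  have hKV : 1 < finrank K V := by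
    refine lt_of_mul_lt_mul_left (a := finrank F K) ?_ (Nat.zero_le _)
    rwa [Module.finrank_mul_finrank, mul_one, pb.finrank]
  obtain ⟨e, he, he0, he1⟩ := Module.End.exists_isIdempotentElem_ne_zero_ne_one hKV
  refine ⟨e.restrictScalars F, congrArg (LinearMap.restrictScalars F) he,
    fun h0 => he0 (LinearMap.restrictScalars_injective F h0),
    fun h1 => he1 (LinearMap.restrictScalars_injective F h1), LinearMap.ext fun v => ?_⟩
  show f (e v) = e (f v)
  rw [hroot, hroot, map_smul]

theorem Matrix.exists_isIdempotentElem_commute_of_irreducible_minpoly {F ι : Type*} [Field F]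
    [Fintype ι] [DecidableEq ι] (A : Matrix ι ι F) (hA : Irreducible (minpoly F A))
    (hdeg : (minpoly F A).natDegree < Fintype.card ι) :
    ∃ E : Matrix ι ι F, IsIdempotentElem E ∧ E ≠ 0 ∧ E ≠ 1 ∧ Commute A E := by
  let σ := Matrix.toLinAlgEquiv' (R := F) (n := ι)
  rw [← minpoly.algEquiv_eq σ] at hA hdeg
  rw [← Module.finrank_fintype_fun_eq_card F] at hdeg
  obtain ⟨e, he, he0, he1, hAe⟩ :=
    Module.End.exists_isIdempotentElem_commute_of_irreducible_minpoly (σ A) hA hdeg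
  refine ⟨σ.symm e, he.map σ.symm, by simpa using he0, by simpa using he1, ?_⟩
  simpa using hAe.map σ.symm

/-- If every irreducible polynomial over `F` has degree `< n`, then every `n × n` matrix
over `F` commutes with a nonzero nilpotent matrix or with a nontrivial idempotent matrix. -/
theorem exists_nilpotent_or_idempotent_commuting
    (F : Type*) [Field F] (n : ℕ) (hn : 1 ≤ n)
    (hirr : ∀ p : Polynomial F, Irreducible p → p.natDegree < n)
    (A : Matrix (Fin n) (Fin n) F) :
    (∃ N : Matrix (Fin n) (Fin n) F, N ≠ 0 ∧ IsNilpotent N ∧ A * N = N * A) ∨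
    (∃ E : Matrix (Fin n) (Fin n) F, E * E = E ∧ E ≠ 0 ∧ E ≠ 1 ∧ A * E = E * A) := by
  have : Nonempty (Fin n) := ⟨⟨0, hn⟩⟩
  have hA : IsIntegral F A := Algebra.IsIntegral.isIntegral A
  by_cases hsq : Squarefree (minpoly F A)
  · by_cases hmin : Irreducible (minpoly F A)
    · exact Or.inr <| Matrix.exists_isIdempotentElem_commute_of_irreducible_minpoly A hmin
        (by simpa using hirr _ hmin)
    · exact Or.inr <| exists_isIdempotentElem_commute_of_squarefree_minpoly hA hsq hmin
  · exact Or.inl <| exists_isNilpotent_commute_of_not_squarefree_minpoly hA hsq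
end

section
/- Let F be a field, n ≥ 2, and let A ∈ M_n(F) be a derogatory matrix, i.e., the degree of the minimal polynomial of A over F is strictly less than n. Then A commutes with some nontrivial idempotent matrix E ∈ M_n(F). -/
/-!
Through `A`, the space `Fin n → F` is a finitely generated torsion `F[X]`-module, hence a direct
sum of cyclic modules `F[X] ⧸ (p i ^ e i)`. If two summands are nonzero, the projection onto one
of them is `F[X]`-linear, i.e. commutes with `A`, and is a nontrivial idempotent. Otherwise the
module is cyclic, so it is a quotient of `F[X] ⧸ (minpoly A)` and `n ≤ deg (minpoly A)`.
-/

open Polynomial Module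

namespace DirectSum

variable {R ι : Type*} [DecidableEq ι]

theorem exists_isIdempotentElem_ne_zero_ne_one [Semiring R] {Q : ι → Type*}
    [∀ i, AddCommMonoid (Q i)] [∀ i, Module R (Q i)] {i j : ι} (hij : i ≠ j)
    [Nontrivial (Q i)] [Nontrivial (Q j)] :
    ∃ E : Module.End R (⨁ k, Q k), IsIdempotentElem E ∧ E ≠ 0 ∧ E ≠ 1 := by
  set P := lof R ι Q i ∘ₗ component R ι Q i
  obtain ⟨q, hq⟩ := exists_ne (0 : Q i)
  obtain ⟨q', hq'⟩ := exists_ne (0 : Q j)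
  refine ⟨P, ?_, fun h => ?_, fun h => ?_⟩
  · ext k x : 2
    simp [P, component.of]
  · have hPq := LinearMap.congr_fun h (lof R ι Q i q)
    rw [LinearMap.comp_apply, component.lof_self, LinearMap.zero_apply] at hPq
    exact hq (of_injective i (hPq.trans (map_zero _).symm))
  · have hPq' := LinearMap.congr_fun h (lof R ι Q j q')
    rw [LinearMap.comp_apply, component.of, dif_neg hij.symm, map_zero,
      Module.End.one_apply] at hPq'
    exact hq' (of_injective j (hPq'.symm.trans (map_zero _).symm))

theorem exists_span_singleton_eq_top [CommRing R] (I : ι → Ideal R)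
    (h : ∀ i j, I i ≠ ⊤ → I j ≠ ⊤ → i = j) :
    ∃ v : ⨁ i, R ⧸ I i, Submodule.span R {v} = ⊤ := by
  by_cases hex : ∃ i, I i ≠ ⊤
  · obtain ⟨i, hi⟩ := hex
    refine ⟨lof R ι (fun i => R ⧸ I i) i 1, eq_top_iff.mpr fun x _ => ?_⟩
    obtain ⟨r, hr⟩ := Ideal.Quotient.mk_surjective (x i)
    refine Submodule.mem_span_singleton.mpr ⟨r, DFinsupp.ext fun j => ?_⟩
    rcases eq_or_ne j i with rfl | hj
    · rw [← hr, smul_apply, lof_apply, Algebra.smul_def, mul_one,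
        Ideal.Quotient.algebraMap_eq]
    · have : Subsingleton (R ⧸ I j) :=
        Ideal.Quotient.subsingleton_iff.mpr (by_contra fun hj' => hj (h _ _ hj' hi))
      exact Subsingleton.elim _ _
  · push Not at hex
    have : ∀ i, Subsingleton (R ⧸ I i) := fun i => Ideal.Quotient.subsingleton_iff.mpr (hex i)
    exact ⟨0, Subsingleton.elim _ _⟩

end DirectSum

namespace Module.AEval'

variable {R M : Type*} [CommSemiring R] [AddCommMonoid M] [Module R M] (φ : Module.End R M)

noncomputable def endRingHom : Module.End R[X] (AEval' φ) →+* Module.End R M :=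
  (AEval'.of φ).symm.conjRingEquiv.toRingHom.comp
    { toFun := LinearMap.restrictScalars R
      map_one' := rfl
      map_mul' := fun _ _ => rfl
      map_zero' := rfl
      map_add' := fun _ _ => rfl }

theorem endRingHom_injective : Function.Injective (endRingHom φ) :=
  (AEval'.of φ).symm.conjRingEquiv.injective.comp (LinearMap.restrictScalars_injective R)

theorem endRingHom_algebraMap_X : endRingHom φ (algebraMap R[X] _ X) = φ := by
  ext m
  change (AEval'.of φ).symm ((X : R[X]) • AEval'.of φ m) = φ m
  simp

theorem commute_endRingHom (E : Module.End R[X] (AEval' φ)) : Commute φ (endRingHom φ E) := by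
  simpa only [endRingHom_algebraMap_X] using
    (Algebra.commute_algebraMap_left (X : R[X]) E).map (endRingHom φ)

theorem finrank_le_natDegree_minpoly {K V : Type*} [Field K] [AddCommGroup V]
    [Module K V] [FiniteDimensional K V] (f : Module.End K V) {v : AEval' f}
    (hv : Submodule.span K[X] {v} = ⊤) : finrank K V ≤ (minpoly K f).natDegree := by
  have hmonic : (minpoly K f).Monic := minpoly.monic (Algebra.IsIntegral.isIntegral f)
  have := hmonic.finite_quotient
  have hker : Ideal.span {minpoly K f} ≤ LinearMap.ker (LinearMap.toSpanSingleton K[X] _ v) := by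
    rw [Ideal.span_le, Set.singleton_subset_iff, SetLike.mem_coe, LinearMap.mem_ker]
    apply (AEval'.of f).symm.injective
    simp
  set L := (Ideal.span {minpoly K f}).liftQ (LinearMap.toSpanSingleton K[X] _ v) hker
  have hsurj : Function.Surjective L := by
    rw [← LinearMap.range_eq_top, Submodule.range_liftQ, LinearMap.range_toSpanSingleton, hv]
  calc finrank K V = finrank K (AEval' f) := (AEval'.of f).finrank_eq
    _ ≤ finrank K (K[X] ⧸ Ideal.span {minpoly K f}) :=
      LinearMap.finrank_le_finrank_of_surjective (f := L.restrictScalars K) hsurj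
    _ = (minpoly K f).natDegree := finrank_quotient_span_eq_natDegree

end Module.AEval'

theorem Matrix.exists_isIdempotentElem_commute_of_aeval {K n : Type*} [CommRing K] [Fintype n]
    [DecidableEq n] (A : Matrix n n K) {E : Module.End K[X] (AEval' (Matrix.toLin' A))}
    (hE : IsIdempotentElem E) (h0 : E ≠ 0) (h1 : E ≠ 1) :
    ∃ E' : Matrix n n K, IsIdempotentElem E' ∧ E' ≠ 0 ∧ E' ≠ 1 ∧ Commute A E' := by
  let ψ := (LinearMap.toMatrixAlgEquiv' (R := K) (n := n)).toRingHom.comp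
    (AEval'.endRingHom (Matrix.toLin' A))
  have hψ : Function.Injective ψ :=
    LinearMap.toMatrixAlgEquiv'.injective.comp (AEval'.endRingHom_injective _)
  refine ⟨ψ E, hE.map ψ, (map_ne_zero_iff ψ hψ).mpr h0,
    fun h => h1 (hψ (h.trans ψ.map_one.symm)), ?_⟩
  have hA : LinearMap.toMatrixAlgEquiv' (Matrix.toLin' A) = A :=
    LinearMap.toMatrixAlgEquiv'_toLinAlgEquiv' A
  have hcomm := (AEval'.commute_endRingHom (Matrix.toLin' A) E).map LinearMap.toMatrixAlgEquiv'
  rwa [hA] at hcomm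

theorem derogatory_commutes_with_nontrivial_idempotent_general
    (F : Type*) [Field F] (n : ℕ)
    (A : Matrix (Fin n) (Fin n) F)
    (hA : (minpoly F A).natDegree < n) :
    ∃ E : Matrix (Fin n) (Fin n) F, E * E = E ∧ E ≠ 0 ∧ E ≠ 1 ∧ A * E = E * A := by
  classical
  obtain ⟨ι, _, p, -, e, ⟨φ⟩⟩ := Module.equiv_directSum_of_isTorsion
    (AEval.isTorsion_of_finiteDimensional F (Fin n → F) (Matrix.toLin' A))
  by_cases h : ∃ i j, i ≠ j ∧ F[X] ∙ p i ^ e i ≠ ⊤ ∧ F[X] ∙ p j ^ e j ≠ ⊤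
  · obtain ⟨i, j, hij, hi, hj⟩ := h
    have := Ideal.Quotient.nontrivial_iff.mpr hi
    have := Ideal.Quotient.nontrivial_iff.mpr hj
    obtain ⟨E, hE, h0, h1⟩ := DirectSum.exists_isIdempotentElem_ne_zero_ne_one (R := F[X])
      (Q := fun k => F[X] ⧸ F[X] ∙ p k ^ e k) hij
    exact Matrix.exists_isIdempotentElem_commute_of_aeval A
      (hE.map φ.symm.conjRingEquiv) (by simpa using h0) (by simpa using h1)
  · obtain ⟨v, hv⟩ := DirectSum.exists_span_singleton_eq_top _ fun i j hi hj =>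
      by_contra fun hij => h ⟨i, j, hij, hi, hj⟩
    have hv' := congrArg (Submodule.map φ.symm.toLinearMap) hv
    rw [Submodule.map_span, Submodule.map_top, LinearEquiv.range, Set.image_singleton] at hv'
    have := AEval'.finrank_le_natDegree_minpoly (Matrix.toLin' A) hv'
    rw [Module.finrank_fin_fun, Matrix.minpoly_toLin'] at this
    omega

/-- A derogatory matrix (minimal polynomial of degree `< n`) commutes with a nontrivial
idempotent matrix. -/
theorem derogatory_commutes_with_nontrivial_idempotent
    (F : Type*) [Field F] (n : ℕ) (hn : 2 ≤ n)
    (A : Matrix (Fin n) (Fin n) F)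
    (hA : (minpoly F A).natDegree < n) :
    ∃ E : Matrix (Fin n) (Fin n) F, E * E = E ∧ E ≠ 0 ∧ E ≠ 1 ∧ A * E = E * A :=
  derogatory_commutes_with_nontrivial_idempotent_general F n A hA
end

section
/- Let F be a field and n ≥ 3. If E₁, E₂ ∈ M_n(F) are two noncentral idempotent matrices, then the distance between E₁ and E₂ in the commuting graph Γ(M_n(F)) is at most 2. -/
/-- A matrix is noncentral iff it is not a scalar multiple of the identity. -/
def Matrix.IsNoncentral {F : Type*} [Field F] {n : ℕ} (A : Matrix (Fin n) (Fin n) F) : Prop :=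
  ∀ c : F, A ≠ c • (1 : Matrix (Fin n) (Fin n) F)

/-- The commuting graph of the matrix ring `M_n(F)`: vertices are the noncentral
matrices, and two distinct vertices are adjacent iff they commute. -/
def commutingGraph (F : Type*) [Field F] (n : ℕ) :
    SimpleGraph {A : Matrix (Fin n) (Fin n) F // A.IsNoncentral} where
  Adj A B := A ≠ B ∧ A.val * B.val = B.val * A.val
  symm := ⟨fun A B h => ⟨h.1.symm, h.2.symm⟩⟩
  loopless := ⟨fun A h => h.1 rfl⟩

/-!
If `P = E₁` and `Q = E₂` commute there is nothing to prove. Otherwise `(P - Q)²` commutes with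
both, as it does for any two idempotents, so it is a common neighbour unless it is a scalar `c`.
In that case `P Q P = (1 - c) P` and `(1 - P) Q (1 - P) = c (1 - P)`, and these identities make
`b y + y b` commute with `P` and `Q` for `b = P Q (1 - P)` and every `y ∈ (1 - P) M P`.
For `y` of rank one this matrix has rank at most `2 < n`, so it is noncentral as soon as
`b y ≠ 0`; such a `y` exists when `b ≠ 0`, and when `b = 0` the argument applies to `1 - P`.
-/

theorem commute_of_mul_mul_one_sub_eq_zero {R : Type*} [Ring R] {P Q : R}
    (hb : P * Q * (1 - P) = 0) (hd : (1 - P) * Q * P = 0) : Commute P Q := by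
  rw [mul_sub, mul_one, sub_eq_zero] at hb
  rw [mul_assoc, sub_mul, one_mul, sub_eq_zero, ← mul_assoc] at hd
  exact hb.trans hd.symm

namespace IsIdempotentElem

variable {R : Type*} [Ring R] {P Q : R}

theorem commute_sub_sq (hP : IsIdempotentElem P) (hQ : IsIdempotentElem Q) :
    Commute ((P - Q) ^ 2) P := by
  simp only [Commute, SemiconjBy, sq, mul_sub, sub_mul, mul_assoc, hP.eq, hQ.eq, hP.mul_self_mul]
  abel

theorem one_sub_sub_sq (hP : IsIdempotentElem P) (hQ : IsIdempotentElem Q) :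
    (1 - P - Q) ^ 2 = 1 - (P - Q) ^ 2 := by
  simp only [sq, mul_sub, sub_mul, mul_one, one_mul, hP.eq, hQ.eq]
  abel

theorem mul_corner_eq (hP : IsIdempotentElem P) {y : R} (hPy : P * y = 0) :
    P * (P * Q * y + y * Q * (1 - P)) = P * Q * y := by
  simp only [mul_add, ← mul_assoc, hP.eq, hPy, zero_mul, add_zero]

/-- With `b = P * Q * (1 - P)` and `y ∈ (1 - P) R P`, the element below is `b * y + y * b`. -/
theorem commute_corner_self (hP : IsIdempotentElem P) {y : R} (hPy : P * y = 0)
    (hyP : y * P = y) : Commute (P * Q * y + y * Q * (1 - P)) P := by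
  have hCP : (P * Q * y + y * Q * (1 - P)) * P = P * Q * y := by
    simp only [add_mul, mul_assoc, hyP, hP.one_sub_mul_self, mul_zero, add_zero]
  exact hCP.trans (hP.mul_corner_eq hPy).symm

variable {K : Type*} [CommRing K] [Algebra K R] {c : K}

theorem mul_mul_self_of_sub_sq (hP : IsIdempotentElem P) (hQ : IsIdempotentElem Q)
    (hc : (P - Q) ^ 2 = c • 1) : P * Q * P = (1 - c) • P := by
  have h : P * (P - Q) ^ 2 * P = P - P * Q * P := by
    simp only [sq, mul_sub, sub_mul, mul_assoc, hP.eq, hQ.eq, hP.mul_self_mul]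
    abel
  rw [hc, mul_smul_comm, smul_mul_assoc, mul_one, hP.eq] at h
  rw [sub_smul, one_smul, h, sub_sub_cancel]

theorem commute_corner_of_sub_sq (hP : IsIdempotentElem P) (hQ : IsIdempotentElem Q)
    (hc : (P - Q) ^ 2 = c • 1) {y : R} (hPy : P * y = 0) (hyP : y * P = y) :
    Commute (P * Q * y + y * Q * (1 - P)) Q := by
  have hy : (1 - P) * y = y := by rw [sub_mul, one_mul, hPy, sub_zero]
  have hQPQ : Q * P * Q = (1 - c) • Q :=
    hQ.mul_mul_self_of_sub_sq hP (by rwa [← neg_sub, neg_sq])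
  have hP'QP' : (1 - P) * Q * (1 - P) = c • (1 - P) := by
    have := hP.one_sub.mul_mul_self_of_sub_sq hQ (c := 1 - c)
      (by rw [hP.one_sub_sub_sq hQ, hc, sub_smul, one_smul])
    rwa [sub_sub_cancel] at this
  have hyQP : y * Q * P = (1 - c) • y := calc
    y * Q * P = y * (P * Q * P) := by simp only [← mul_assoc, hyP]
    _ = (1 - c) • y := by rw [hP.mul_mul_self_of_sub_sq hQ hc, mul_smul_comm, hyP]
  have hP'Qy : (1 - P) * Q * y = c • y := calc
    (1 - P) * Q * y = (1 - P) * Q * (1 - P) * y := by rw [mul_assoc _ (1 - P), hy]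
    _ = c • y := by rw [hP'QP', smul_mul_assoc, hy]
  have hCQ : (P * Q * y + y * Q * (1 - P)) * Q = Q * y * Q := calc
    (P * Q * y + y * Q * (1 - P)) * Q = P * Q * y * Q + y * Q * Q - y * (Q * P * Q) := by
      noncomm_ring
    _ = P * Q * y * Q + (1 - P) * Q * y * Q := by
      rw [hQ.mul_mul_self, hQPQ, hP'Qy, mul_smul_comm, smul_mul_assoc]; module
    _ = Q * y * Q := by noncomm_ring
  have hQC : Q * (P * Q * y + y * Q * (1 - P)) = Q * y * Q := calc
    Q * (P * Q * y + y * Q * (1 - P)) = Q * P * Q * y + Q * y * Q - Q * (y * Q * P) := by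
      noncomm_ring
    _ = Q * y * Q := by rw [hQPQ, hyQP, smul_mul_assoc, mul_smul_comm]; abel
  exact hCQ.trans hQC.symm

end IsIdempotentElem

namespace Matrix

variable {K : Type*} [Field K]

theorem rank_add_le {m n : Type*} [Finite m] [Fintype n] (A B : Matrix m n K) :
    (A + B).rank ≤ A.rank + B.rank := by
  rw [rank, rank, rank, mulVecLin_add]
  exact (Submodule.finrank_mono (LinearMap.range_add_le _ _)).trans
    (Submodule.finrank_add_le_finrank_add_finrank _ _)

theorem rank_smul_one {n : Type*} [Fintype n] [DecidableEq n] {γ : K} (hγ : γ ≠ 0) :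
    (γ • (1 : Matrix n n K)).rank = Fintype.card n := by
  rw [rank_smul_of_mem_nonZeroDivisors _ (mem_nonZeroDivisors_of_ne_zero hγ), rank_one]

variable {n : ℕ} {P Q : Matrix (Fin n) (Fin n) K}

theorem exists_isNoncentral_commute_of_sub_sq (hn : 3 ≤ n) (hP : IsIdempotentElem P)
    (hQ : IsIdempotentElem Q) {c : K} (hc : (P - Q) ^ 2 = c • 1) (hb : P * Q * (1 - P) ≠ 0) :
    ∃ C : Matrix (Fin n) (Fin n) K, C.IsNoncentral ∧ Commute C P ∧ Commute C Q := by
  obtain ⟨z, hz⟩ : ∃ z, (P * Q * (1 - P)) *ᵥ z ≠ 0 := by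
    by_contra! h
    exact hb (mulVec_injective (funext fun z => by simpa using h z))
  obtain ⟨w, hw⟩ : ∃ w, w ᵥ* P ≠ 0 := by
    by_contra! h
    obtain rfl : P = 0 := vecMul_injective (funext fun w => by simpa using h w)
    simp at hb
  set y := vecMulVec ((1 - P) *ᵥ z) (w ᵥ* P)
  have hPy : P * y = 0 := by
    rw [mul_vecMulVec, mulVec_mulVec, hP.mul_one_sub_self, zero_mulVec, zero_vecMulVec]
  have hyP : y * P = y := by rw [vecMulVec_mul, vecMul_vecMul, hP.eq]
  refine ⟨P * Q * y + y * Q * (1 - P), fun γ hγ => ?_, hP.commute_corner_self hPy hyP,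
    hP.commute_corner_of_sub_sq hQ hc hPy hyP⟩
  have hrank : (P * Q * y + y * Q * (1 - P)).rank ≤ 2 := calc
    _ ≤ (P * Q * y).rank + (y * Q * (1 - P)).rank := rank_add_le _ _
    _ ≤ y.rank + y.rank := add_le_add (rank_mul_le_right _ _)
        ((rank_mul_le_left _ _).trans (rank_mul_le_left _ _))
    _ ≤ 1 + 1 := add_le_add (rank_vecMulVec_le _ _) (rank_vecMulVec_le _ _)
  obtain rfl : γ = 0 := by
    by_contra hγ0
    rw [hγ, rank_smul_one hγ0, Fintype.card_fin] at hrank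
    omega
  apply vecMulVec_ne_zero hz hw
  rw [← mulVec_mulVec, ← mul_vecMulVec, ← hP.mul_corner_eq hPy, hγ, zero_smul, mul_zero]

theorem exists_isNoncentral_commute (hn : 3 ≤ n) (hP : IsIdempotentElem P)
    (hQ : IsIdempotentElem Q) (hPQ : ¬Commute P Q) :
    ∃ C : Matrix (Fin n) (Fin n) K, C.IsNoncentral ∧ Commute C P ∧ Commute C Q := by
  by_cases hD : ((P - Q) ^ 2).IsNoncentral
  · refine ⟨_, hD, hP.commute_sub_sq hQ, ?_⟩
    rw [← neg_sub, neg_sq]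
    exact hQ.commute_sub_sq hP
  obtain ⟨c, hc⟩ : ∃ c : K, (P - Q) ^ 2 = c • 1 := by simpa [IsNoncentral] using hD
  by_cases hb : P * Q * (1 - P) = 0
  · have hd : (1 - P) * Q * (1 - (1 - P)) ≠ 0 := by
      rw [sub_sub_cancel]
      exact fun hd => hPQ (commute_of_mul_mul_one_sub_eq_zero hb hd)
    obtain ⟨C, hC, hCP, hCQ⟩ := exists_isNoncentral_commute_of_sub_sq hn hP.one_sub hQ
      (c := 1 - c) (by rw [hP.one_sub_sub_sq hQ, hc, sub_smul, one_smul]) hd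
    exact ⟨C, hC, by simpa using (Commute.one_right C).sub_right hCP, hCQ⟩
  · exact exists_isNoncentral_commute_of_sub_sq hn hP hQ hc hb

end Matrix

namespace commutingGraph

variable {F : Type*} [Field F] {n : ℕ}

theorem edist_le_one_of_commute {A B : {A : Matrix (Fin n) (Fin n) F // A.IsNoncentral}}
    (h : Commute A.val B.val) : (commutingGraph F n).edist A B ≤ 1 := by
  rcases eq_or_ne A B with rfl | hne
  · simp
  · have hadj : (commutingGraph F n).Adj A B := ⟨hne, h⟩
    exact (SimpleGraph.edist_eq_one_iff_adj.2 hadj).le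

theorem edist_le_two_of_commute {A B C : {A : Matrix (Fin n) (Fin n) F // A.IsNoncentral}}
    (hA : Commute C.val A.val) (hB : Commute C.val B.val) :
    (commutingGraph F n).edist A B ≤ 2 := calc
  _ ≤ (commutingGraph F n).edist A C + (commutingGraph F n).edist C B :=
    SimpleGraph.edist_triangle
  _ ≤ 1 + 1 := add_le_add (edist_le_one_of_commute hA.symm) (edist_le_one_of_commute hB)
  _ = 2 := by norm_num

end commutingGraph

/-- Two noncentral idempotent matrices are at distance at most 2 in the commuting graph. -/
theorem edist_le_two_of_idempotents
    (F : Type*) [Field F] (n : ℕ) (hn : 3 ≤ n)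
    (E₁ E₂ : Matrix (Fin n) (Fin n) F)
    (hE₁ : E₁ * E₁ = E₁) (hE₂ : E₂ * E₂ = E₂)
    (h₁ : E₁.IsNoncentral) (h₂ : E₂.IsNoncentral) :
    (commutingGraph F n).edist ⟨E₁, h₁⟩ ⟨E₂, h₂⟩ ≤ 2 := by
  obtain ⟨C, hC, hC₁, hC₂⟩ :
      ∃ C : Matrix (Fin n) (Fin n) F, C.IsNoncentral ∧ Commute C E₁ ∧ Commute C E₂ := by
    by_cases h : Commute E₁ E₂
    · exact ⟨E₁, h₁, Commute.refl E₁, h⟩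
    · exact Matrix.exists_isNoncentral_commute hn hE₁ hE₂ h
  exact commutingGraph.edist_le_two_of_commute (C := ⟨C, hC⟩) hC₁ hC₂
end
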